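/- If P is a parking function of size n whose label 1 dominates no column to its right (d_1 = 0) and whose image r(P) is column-restricted, then P itself is column-restricted. -/

import Mathlib

open SimpleGraph

/-- A candidate leaf-labeled graph on vertex set `Fin V` with `L` labeled leaves. -/
structure PreTree (L V : ℕ) where
  adj : Fin V → Fin V → Bool
  symm' : ∀ u v, adj u v = adj v u
  loopless' : ∀ v, adj v v = false
  leaf : Fin L → Fin V

def PreTree.G {L V : ℕ} (T : PreTree L V) : SimpleGraph (Fin V) where
  Adj u v := T.adj u v = true
  symm := ⟨fun u v (h : T.adj u v = true) => show T.adj v u = true by rw [T.symm']; exact h⟩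
  loopless := ⟨fun v (h : T.adj v v = true) => by rw [T.loopless' v] at h; exact Bool.noConfusion h⟩

instance {L V : ℕ} (T : PreTree L V) : DecidableRel T.G.Adj :=
  fun u v => inferInstanceAs (Decidable (T.adj u v = true))

/-- `T` is a trivalent tree with leaves labeled bijectively by `Fin L`. -/
def PreTree.IsTrivalent {L V : ℕ} (T : PreTree L V) : Prop :=
  T.G.IsTree ∧ (∀ v, T.G.degree v = 1 ∨ T.G.degree v = 3) ∧
    Function.Injective T.leaf ∧ (∀ i, T.G.degree (T.leaf i) = 1) ∧
    (∀ v, T.G.degree v = 1 → ∃ i, T.leaf i = v)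

/-- Label-preserving isomorphism of leaf-labeled graphs. -/
def PreTree.Iso {L V : ℕ} (T T' : PreTree L V) : Prop :=
  ∃ σ : Fin V ≃ Fin V, (∀ u v, T'.adj (σ u) (σ v) = T.adj u v) ∧ ∀ i, σ (T.leaf i) = T'.leaf i

/-- Leaves `a = 0` and `b = 1` share a common (internal) vertex. -/
def PreTree.ABAdj {n V : ℕ} (T : PreTree (n+3) V) : Prop :=
  ∃ v, T.G.Adj (T.leaf 0) v ∧ T.G.Adj (T.leaf 1) v

/-- Number of isomorphism classes of leaf-labeled graphs satisfying `P`. -/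
noncomputable def classCount {L V : ℕ} (P : PreTree L V → Prop) : ℕ :=
  Nat.card (Quot fun (T T' : {T : PreTree L V // P T}) => PreTree.Iso T.1 T'.1)

/-- `w` separates `x` from `y` in `G`: every walk from `x` to `y` passes through `w`. -/
def Separates {V : Type*} (G : SimpleGraph V) (w x y : V) : Prop :=
  ∀ p : G.Walk x y, w ∈ p.support

/-- The laziness rule applies: the unlabeled edge `E` is adjacent to a labeled
edge carrying a label `u ≠ j` with `u > i`. -/
def LazyApplies {n : ℕ} (T : PreTree (n+3) (2*n+4))
    (lab : Sym2 (Fin (2*n+4)) → Option (Fin (n+3)))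
    (E : Sym2 (Fin (2*n+4))) (i j : Fin (n+3)) : Prop :=
  ∃ (e : Sym2 (Fin (2*n+4))) (u : Fin (n+3)) (v : Fin (2*n+4)),
    e ∈ T.G.edgeSet ∧ v ∈ e ∧ v ∈ E ∧ e ≠ E ∧ lab e = some u ∧ u ≠ j ∧ i < u

/-- A run of the lazy tournament on a tree with `n+3` leaves (labels ordered
`a = 0 < b = 1 < c = 2 < 1 = 3 < ⋯ < n = n+2` as elements of `Fin (n+3)`).
`lab t` is the edge labeling before round `t`; round `t` has `loser t < winner t`
on adjacent labeled edges `loserE t`, `winnerE t` sharing vertex `vtx t` with the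
unlabeled edge `newE t`, the pair having the maximal smaller label, and `newE t`
gets labeled according to the laziness rule. -/
structure Run (n : ℕ) (T : PreTree (n+3) (2*n+4)) where
  lab : ℕ → Sym2 (Fin (2*n+4)) → Option (Fin (n+3))
  loser : Fin n → Fin (n+3)
  winner : Fin n → Fin (n+3)
  loserE : Fin n → Sym2 (Fin (2*n+4))
  winnerE : Fin n → Sym2 (Fin (2*n+4))
  newE : Fin n → Sym2 (Fin (2*n+4))
  vtx : Fin n → Fin (2*n+4)
  init_leaf : ∀ (i : Fin (n+3)) (w : Fin (2*n+4)), T.G.Adj (T.leaf i) w →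
    lab 0 s(T.leaf i, w) = some i
  init_other : ∀ e : Sym2 (Fin (2*n+4)), (∀ i : Fin (n+3), T.leaf i ∉ e) → lab 0 e = none
  init_nonedge : ∀ e, e ∉ T.G.edgeSet → lab 0 e = none
  lt_lw : ∀ t, loser t < winner t
  loserE_mem : ∀ t, loserE t ∈ T.G.edgeSet
  winnerE_mem : ∀ t, winnerE t ∈ T.G.edgeSet
  newE_mem : ∀ t, newE t ∈ T.G.edgeSet
  lab_loserE : ∀ t, lab t.1 (loserE t) = some (loser t)
  lab_winnerE : ∀ t, lab t.1 (winnerE t) = some (winner t)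
  vtx_mem : ∀ t, vtx t ∈ loserE t ∧ vtx t ∈ winnerE t ∧ vtx t ∈ newE t
  edges_distinct : ∀ t, loserE t ≠ winnerE t ∧ loserE t ≠ newE t ∧ winnerE t ≠ newE t
  newE_unlabeled : ∀ t, lab t.1 (newE t) = none
  max_rule : ∀ (t : Fin n) (e1 e2 e3 : Sym2 (Fin (2*n+4))) (i j : Fin (n+3)) (v : Fin (2*n+4)),
    e1 ∈ T.G.edgeSet → e2 ∈ T.G.edgeSet → e3 ∈ T.G.edgeSet →
    lab t.1 e1 = some i → lab t.1 e2 = some j → lab t.1 e3 = none → i < j →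
    v ∈ e1 → v ∈ e2 → v ∈ e3 → e1 ≠ e2 → e1 ≠ e3 → e2 ≠ e3 →
    i ≤ loser t
  step_lazy : ∀ t : Fin n, LazyApplies T (lab t.1) (newE t) (loser t) (winner t) →
    lab (t.1+1) (newE t) = some (loser t)
  step_nonlazy : ∀ t : Fin n, ¬ LazyApplies T (lab t.1) (newE t) (loser t) (winner t) →
    lab (t.1+1) (newE t) = some (winner t)
  step_frame : ∀ (t : Fin n) (e : Sym2 (Fin (2*n+4))), e ≠ newE t → lab (t.1+1) e = lab t.1 e

/-- Number of rounds won by label `i`. -/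
def Run.wins {n : ℕ} {T : PreTree (n+3) (2*n+4)} (R : Run n T) (i : Fin (n+3)) : ℕ :=
  (Finset.univ.filter fun t : Fin n => R.winner t = i).card

/-- The element of `Fin (n+3)` corresponding to the numeric label `m+1 ∈ {1,…,n}`. -/
def lbl {n : ℕ} (m : Fin n) : Fin (n+3) := ⟨(m:ℕ)+3, by omega⟩

/-- `T ∈ Tour(k₁,…,kₙ)`. -/
def InTour {n : ℕ} (k : Fin n → ℕ) (T : PreTree (n+3) (2*n+4)) : Prop :=
  T.IsTrivalent ∧ T.ABAdj ∧ ∃ R : Run n T, ∀ m : Fin n, R.wins (lbl m) = k m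

/-- `|Tour(k₁,…,kₙ)|` (isomorphism classes). -/
noncomputable def TourCount {n : ℕ} (k : Fin n → ℕ) : ℕ := classCount (InTour k)

/-- `T'` is obtained from `T` by deleting the largest leaf and suppressing
the resulting degree-2 vertex `w`. -/
def DelLast (n : ℕ) (T : PreTree ((n+1)+3) (2*(n+1)+4)) (T' : PreTree (n+3) (2*n+4)) : Prop :=
  ∃ (g : Fin (2*n+4) → Fin (2*(n+1)+4)) (w : Fin (2*(n+1)+4)),
    Function.Injective g ∧
    T.G.Adj (T.leaf (Fin.last (n+3))) w ∧
    (∀ v, v ∈ Set.range g ↔ (v ≠ T.leaf (Fin.last (n+3)) ∧ v ≠ w)) ∧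
    (∀ u u' : Fin (2*n+4), T'.G.Adj u u' ↔
      (T.G.Adj (g u) (g u') ∨ (T.G.Adj (g u) w ∧ T.G.Adj (g u') w ∧ g u ≠ g u'))) ∧
    (∀ i : Fin (n+3), g (T'.leaf i) = T.leaf (Fin.castSucc i))

/-- `T'` is obtained from `T` by successively deleting the leaves `r+1, …, n`. -/
inductive Restricts : (n : ℕ) → (r : ℕ) → PreTree (n+3) (2*n+4) → PreTree (r+3) (2*r+4) → Prop
  | refl (n : ℕ) (T : PreTree (n+3) (2*n+4)) : Restricts n n T T
  | step (n r : ℕ) (T : PreTree ((n+1)+3) (2*(n+1)+4)) (T1 : PreTree (n+3) (2*n+4))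
      (T2 : PreTree (r+3) (2*r+4)) :
      DelLast n T T1 → Restricts n r T1 T2 → Restricts (n+1) r T T2

/-- The composition `k̃_j`: decrement `k j` and delete position `dpos`
(the rightmost zero of the result). -/
def tilde {n : ℕ} (k : Fin (n+1) → ℕ) (dpos : ℕ) (j : Fin (n+1)) : Fin n → ℕ :=
  fun m => if (m:ℕ) < dpos then Function.update k j (k j - 1) (Fin.castSucc m)
           else Function.update k j (k j - 1) (Fin.succ m)

/-- The map `π_lazy` relates `T` to the pair `(j, T')` where `j` is the winner of the
first round of the tournament, the two leaves that competed are deleted (the shared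
vertex becoming a new leaf) and the labels are shifted according to the (non)lazy case. -/
def PiLazyRel (n : ℕ) (k : Fin (n+1) → ℕ) (T : PreTree ((n+1)+3) (2*(n+1)+4))
    (j : Fin (n+1)) (T' : PreTree (n+3) (2*n+4)) : Prop :=
  ∃ (R : Run (n+1) T) (g : Fin (2*n+4) → Fin (2*(n+1)+4)),
    (∀ m : Fin (n+1), R.wins (lbl m) = k m) ∧
    R.winner ⟨0, Nat.succ_pos n⟩ = lbl j ∧
    Function.Injective g ∧
    (∀ v, v ∈ Set.range g ↔
      (v ≠ T.leaf (R.loser ⟨0, Nat.succ_pos n⟩) ∧ v ≠ T.leaf (R.winner ⟨0, Nat.succ_pos n⟩))) ∧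
    (∀ u u' : Fin (2*n+4), T'.G.Adj u u' ↔ T.G.Adj (g u) (g u')) ∧
    (if k j = 1 then
      ∀ β : Fin (n+3), g (T'.leaf β) =
        (if (β:ℕ) = ((R.loser ⟨0, Nat.succ_pos n⟩) : ℕ) then R.vtx ⟨0, Nat.succ_pos n⟩
         else if (β:ℕ) < ((R.winner ⟨0, Nat.succ_pos n⟩) : ℕ) then T.leaf (Fin.castSucc β)
         else T.leaf (Fin.succ β))
     else
      ∀ β : Fin (n+3), g (T'.leaf β) =
        (if (β:ℕ) < ((R.loser ⟨0, Nat.succ_pos n⟩) : ℕ) then T.leaf (Fin.castSucc β)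
         else if (β:ℕ)+1 = ((R.winner ⟨0, Nat.succ_pos n⟩) : ℕ) then R.vtx ⟨0, Nat.succ_pos n⟩
         else T.leaf (Fin.succ β)))

/-! ### Parking functions.
A parking function of size `n` is encoded by `col : Fin n → Fin n`, where `col x` is the
(0-indexed) column of the label `x+1`; the Dyck path condition (for paths from `(0,n)` to
`(n,0)` staying weakly above the diagonal, cells left of down steps) is `IsPF`. -/

def IsPF {n : ℕ} (col : Fin n → Fin n) : Prop :=
  ∀ j : Fin n, n - (j:ℕ) ≤ (Finset.univ.filter fun x => j ≤ col x).card

/-- Dominance index of label `x+1`: the number of columns strictly to its right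
containing no entry greater than `x+1` (empty columns count). -/
def domIdx {n : ℕ} (col : Fin n → Fin n) (x : Fin n) : ℕ :=
  (Finset.univ.filter fun j : Fin n => col x < j ∧ ∀ y, col y = j → y ≤ x).card

/-- Column-restricted: `x > d_x` for all labels `x` (label `x : Fin n` has value `x+1`). -/
def ColRes {n : ℕ} (col : Fin n → Fin n) : Prop := ∀ x : Fin n, domIdx col x < (x:ℕ) + 1

/-- Number of labels in column `j`. -/
def colCount {n : ℕ} (col : Fin n → Fin n) (j : Fin n) : ℕ :=
  (Finset.univ.filter fun x => col x = j).card

/-- `col'` is the image of `col` under the map `r`: remove the row containing the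
label `1`, decrement the remaining labels, and delete the rightmost empty column `E`. -/
def RSpec {n : ℕ} (col : Fin (n+1) → Fin (n+1)) (col' : Fin n → Fin n) : Prop :=
  ∃ E : Fin (n+1),
    (∀ y : Fin (n+1), y ≠ 0 → col y ≠ E) ∧
    (∀ j : Fin (n+1), (∀ y, y ≠ 0 → col y ≠ j) → j ≤ E) ∧
    (∀ x : Fin n, (col' x : ℕ) =
      if (col (Fin.succ x) : ℕ) < (E:ℕ) then (col (Fin.succ x) : ℕ)
      else (col (Fin.succ x) : ℕ) - 1)

/-- `col` is the parking function `τ(T)`: column `col m` contains label `m+1`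
iff the label `col m + 1` wins round `m+1` of the lazy tournament of `T`. -/
def TauRel {n : ℕ} (T : PreTree (n+3) (2*n+4)) (col : Fin n → Fin n) : Prop :=
  ∃ R : Run n T, ∀ t : Fin n, ((R.winner t) : ℕ) = (col t : ℕ) + 3

/-!
Deleting the row of the label `1` and the empty column `E` is, on the remaining labels, the
order-preserving relabelling `E.succAbove` of columns. A column dominated by the label `x + 1`
in `P` is therefore either `E` or the image of a column dominated by `x` in `r(P)`, so
`d_{x+1}(P) ≤ d_x(r(P)) + 1 < x + 1`; the label `1` is handled by `d_1 = 0`.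
-/

theorem RSpec.exists_col_succ_eq_succAbove {n : ℕ} {col : Fin (n + 1) → Fin (n + 1)}
    {col' : Fin n → Fin n} (hr : RSpec col col') :
    ∃ E : Fin (n + 1), ∀ y : Fin n, col y.succ = E.succAbove (col' y) := by
  obtain ⟨E, hE_empty, -, hcol'⟩ := hr
  refine ⟨E, fun y => Fin.ext ?_⟩
  have hne : (col y.succ : ℕ) ≠ E := Fin.val_ne_of_ne (hE_empty _ (Fin.succ_ne_zero y))
  have hy := hcol' y
  unfold Fin.succAbove
  split_ifs at hy ⊢ with h <;> simp only [Fin.lt_def, Fin.val_castSucc, Fin.val_succ] at * <;> omega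

theorem domIdx_succ_le_of_succAbove {n : ℕ} {col : Fin (n + 1) → Fin (n + 1)}
    {col' : Fin n → Fin n} (E : Fin (n + 1))
    (hcol : ∀ y : Fin n, col y.succ = E.succAbove (col' y)) (x : Fin n) :
    domIdx col x.succ ≤ domIdx col' x + 1 := by
  set S' := Finset.univ.filter fun j : Fin n => col' x < j ∧ ∀ y, col' y = j → y ≤ x
  have hsub : (Finset.univ.filter fun j : Fin (n + 1) =>
      col x.succ < j ∧ ∀ y, col y = j → y ≤ x.succ) ⊆ insert E (S'.image E.succAbove) := by
    intro j hj
    simp only [Finset.mem_filter, Finset.mem_univ, true_and] at hj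
    obtain ⟨hlt, hdom⟩ := hj
    rcases eq_or_ne j E with rfl | hjE
    · exact Finset.mem_insert_self _ _
    obtain ⟨j', rfl⟩ := Fin.exists_succAbove_eq hjE
    refine Finset.mem_insert_of_mem (Finset.mem_image_of_mem _ ?_)
    simp only [S', Finset.mem_filter, Finset.mem_univ, true_and]
    refine ⟨?_, fun y hy => ?_⟩
    · rwa [hcol, Fin.succAbove_lt_succAbove_iff] at hlt
    · exact Fin.succ_le_succ_iff.mp (hdom _ (by rw [hcol, hy]))
  calc domIdx col x.succ ≤ (insert E (S'.image E.succAbove)).card := Finset.card_le_card hsub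
    _ ≤ (S'.image E.succAbove).card + 1 := Finset.card_insert_le _ _
    _ = domIdx col' x + 1 := by rw [Finset.card_image_of_injective _ Fin.succAbove_right_injective]; rfl

theorem reverse_cpf_general (n : ℕ) (col : Fin (n+1) → Fin (n+1)) (col' : Fin n → Fin n)
    (hr : RSpec col col') (hd : domIdx col 0 = 0) (hC' : ColRes col') :
    ColRes col := by
  obtain ⟨E, hcol⟩ := hr.exists_col_succ_eq_succAbove
  intro x
  induction x using Fin.cases with
  | zero => simp [hd]
  | succ x =>
    have := domIdx_succ_le_of_succAbove E hcol x
    have := hC' x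
    simp only [Fin.val_succ]
    omega

/-- If `P ∈ PF(n+1)` has `d_1 = 0` and `r(P)` is column-restricted,
then `P` is column-restricted. -/
theorem reverse_cpf (n : ℕ) (col : Fin (n+1) → Fin (n+1)) (col' : Fin n → Fin n)
    (hPF : IsPF col) (hr : RSpec col col') (hd : domIdx col 0 = 0) (hC' : ColRes col') :
    ColRes col :=
  reverse_cpf_general n col col' hr hd hC'
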